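/- Let μ₀ > 0 and C, M > 0. Suppose N ≥ 0 and D ≥ 0 satisfy N ≤ C M² e^{-2sμ₀} + C e^{2Cs} D² for all s ≥ 0. Then there exist constants C' > 0 and θ ∈ (0,1) (depending only on C, M, μ₀) such that N ≤ C' (D² + D^{2θ}), with θ = μ₀/(C+μ₀). -/

import Mathlib

/-!
The bound has the form `N ≤ A e^{-αs} + B e^{βs}` with `A = C M²`, `B = C D²`, `α = 2μ₀`,
`β = 2C`. If `0 < B ≤ A`, the choice `s = log (A / B) / (α + β)` balances the two terms, each
becoming `A^{1-θ} B^θ` with `θ = α / (α + β)`, which is `(C M²)^{1-θ} C^θ D^{2θ}`; if `B = 0`,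
let `s → ∞`. If `B > A`, already `s = 0` gives `N ≤ A + B ≤ 2 C D²`.
-/

open Real Filter Topology

lemma nonpos_of_forall_le_mul_exp_neg {N A α : ℝ} (hα : 0 < α)
    (h : ∀ s, 0 ≤ s → N ≤ A * exp (-(α * s))) : N ≤ 0 := by
  have hlim : Tendsto (fun s => A * exp (-(α * s))) atTop (𝓝 0) := by
    simpa using (tendsto_exp_neg_atTop_nhds_zero.comp (tendsto_id.const_mul_atTop hα)).const_mul A
  exact ge_of_tendsto hlim ((eventually_ge_atTop 0).mono h)

lemma mul_exp_neg_add_mul_exp_at_balance {A B α β : ℝ} (hA : 0 < A) (hB : 0 < B)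
    (hαβ : 0 < α + β) :
    A * exp (-(α * (log (A / B) / (α + β)))) + B * exp (β * (log (A / B) / (α + β))) =
      2 * (A ^ (β / (α + β)) * B ^ (α / (α + β))) := by
  have hterm : ∀ x y : ℝ, 0 < x → x * exp y = exp (log x + y) := fun x y hx => by
    rw [exp_add, exp_log hx]
  rw [hterm A _ hA, hterm B _ hB, rpow_def_of_pos hA, rpow_def_of_pos hB, ← exp_add,
    log_div hA.ne' hB.ne', two_mul]
  congr 2 <;> field_simp <;> ring

lemma le_two_mul_rpow_mul_rpow_of_forall_le {N A B α β : ℝ} (hα : 0 < α) (hβ : 0 ≤ β)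
    (hB : 0 ≤ B) (hBA : B ≤ A) (h : ∀ s, 0 ≤ s → N ≤ A * exp (-(α * s)) + B * exp (β * s)) :
    N ≤ 2 * (A ^ (β / (α + β)) * B ^ (α / (α + β))) := by
  have hαβ : 0 < α + β := by linarith
  rcases hB.eq_or_lt with rfl | hB
  · rw [zero_rpow (by positivity), mul_zero, mul_zero]
    exact nonpos_of_forall_le_mul_exp_neg hα fun s hs => by simpa using h s hs
  · have hs : 0 ≤ log (A / B) / (α + β) :=
      div_nonneg (log_nonneg ((one_le_div hB).2 hBA)) hαβ.le
    exact (h _ hs).trans_eq (mul_exp_neg_add_mul_exp_at_balance (hB.trans_le hBA) hB hαβ)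

theorem holder_conditional_stability_general
    (μ₀ C M : ℝ) (hμ : 0 < μ₀) (hC : 0 < C) :
    ∃ C' > 0, ∀ N D : ℝ, 0 ≤ N → 0 ≤ D →
      (∀ s : ℝ, 0 ≤ s → N ≤ C * M ^ 2 * Real.exp (-2 * s * μ₀)
        + C * Real.exp (2 * C * s) * D ^ 2) →
      0 < μ₀ / (C + μ₀) ∧ μ₀ / (C + μ₀) < 1 ∧
      N ≤ C' * (D ^ 2 + D ^ (2 * (μ₀ / (C + μ₀)))) := by
  set θ := μ₀ / (C + μ₀) with hθ
  have hθ_lt_one : θ < 1 := (div_lt_one (by positivity)).2 (by linarith)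
  set K := (C * M ^ 2) ^ (1 - θ) * C ^ θ
  have hK : 0 ≤ K := by positivity
  refine ⟨2 * (C + K), by positivity, fun N D _ hD hbound => ⟨by positivity, hθ_lt_one, ?_⟩⟩
  have hDθ : 0 ≤ D ^ (2 * θ) := by positivity
  rcases le_total (C * D ^ 2) (C * M ^ 2) with hBA | hAB
  · have hθ_exponents : 2 * μ₀ / (2 * μ₀ + 2 * C) = θ ∧ 2 * C / (2 * μ₀ + 2 * C) = 1 - θ := by
      constructor <;> rw [hθ] <;> field_simp <;> ring
    have hbalanced := le_two_mul_rpow_mul_rpow_of_forall_le (α := 2 * μ₀) (β := 2 * C)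
      (by positivity) (by positivity) (by positivity) hBA
      fun s hs => (hbound s hs).trans_eq (by ring_nf)
    rw [hθ_exponents.1, hθ_exponents.2, mul_rpow hC.le (sq_nonneg D),
      ← rpow_natCast_mul hD] at hbalanced
    push_cast at hbalanced
    nlinarith [sq_nonneg D]
  · have hs_zero := hbound 0 le_rfl
    simp only [mul_zero, zero_mul, exp_zero, mul_one] at hs_zero
    nlinarith [sq_nonneg D]

/-- Hölder-type conditional stability: if
`N ≤ C M² e^{-2sμ₀} + C e^{2Cs} D²` for all `s ≥ 0`, then
`N ≤ C'(D² + D^{2θ})` with `θ = μ₀/(C+μ₀) ∈ (0,1)` and `C'` depending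
only on `C, M, μ₀`. -/
theorem holder_conditional_stability
    (μ₀ C M : ℝ) (hμ : 0 < μ₀) (hC : 0 < C) (hM : 0 < M) :
    ∃ C' > 0, ∀ N D : ℝ, 0 ≤ N → 0 ≤ D →
      (∀ s : ℝ, 0 ≤ s → N ≤ C * M ^ 2 * Real.exp (-2 * s * μ₀)
        + C * Real.exp (2 * C * s) * D ^ 2) →
      0 < μ₀ / (C + μ₀) ∧ μ₀ / (C + μ₀) < 1 ∧
      N ≤ C' * (D ^ 2 + D ^ (2 * (μ₀ / (C + μ₀)))) :=
  holder_conditional_stability_general μ₀ C M hμ hC
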